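/- Under Assumptions that all losses ℓᵢ are differentiable, L-smooth, bounded below, with bounded sublevel sets, and that at any non-Pareto-stationary point the gradients are linearly independent, the Nash-MTL iterates θ^(t+1) = θ^(t) - μ^(t)G^(t)α^(t) with μ^(t) = minᵢ 1/(LKαᵢ^(t)) have a subsequence converging to a Pareto stationary point θ*, and all loss values ℓᵢ(θ^(t)) converge to ℓᵢ(θ*). -/

import Mathlib

/-!
Write `v = ∑ⱼ αⱼ ∇ℓⱼ(θ)` for the Nash-MTL direction. The bargaining equations
`⟪∇ℓᵢ(θ), v⟫ = 1 / αᵢ` give `‖v‖² = K`, and since `μ ≤ 1 / (L K αᵢ)` the descent lemma for the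
`L`-smooth `ℓᵢ` yields `ℓᵢ(θ⁺) ≤ ℓᵢ(θ) - L K μ² / 2` for every task. So each loss decreases to a
limit, the step sizes tend to `0`, and as `μ = 1 / (L K maxᵢ αᵢ)` the weights blow up: `‖α‖ → ∞`.
The iterates stay in a compact sublevel set, so a subsequence converges to some `θ*`, where the
losses take their limiting values. If `θ*` were not Pareto stationary, its gradients would be
linearly independent, and an estimate `‖w‖ ≤ C ‖∑ᵢ wᵢ gᵢ‖` would hold uniformly for all families
`g` near them; along the subsequence this bounds `‖α‖ ≤ C √K`, a contradiction.
-/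

open RealInnerProductSpace

/-- `θ` is Pareto stationary for losses with gradient maps `ℓ'` if some convex combination of
the task gradients at `θ` vanishes. -/
def ParetoStationary {d K : ℕ}
    (ℓ' : Fin K → EuclideanSpace ℝ (Fin d) → EuclideanSpace ℝ (Fin d))
    (θ : EuclideanSpace ℝ (Fin d)) : Prop :=
  ∃ w : Fin K → ℝ, (∀ i, 0 ≤ w i) ∧ (∑ i, w i = 1) ∧ (∑ i, w i • ℓ' i θ = 0)

open Filter Topology

theorem apply_add_le_of_lipschitz_gradient {E : Type*} [NormedAddCommGroup E]
    [InnerProductSpace ℝ E] [CompleteSpace E] {f : E → ℝ} {f' : E → E} {L : ℝ}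
    (hf : ∀ x, HasGradientAt f (f' x) x) (hf' : ∀ x y, ‖f' x - f' y‖ ≤ L * ‖x - y‖) (x u : E) :
    f (x + u) ≤ f x + ⟪f' x, u⟫ + L / 2 * ‖u‖ ^ 2 := by
  let g : ℝ → ℝ := fun s => f (x + s • u) - s * ⟪f' x, u⟫ - L / 2 * s ^ 2 * ‖u‖ ^ 2
  have hg : ∀ s, HasDerivAt g (⟪f' (x + s • u) - f' x, u⟫ - L * s * ‖u‖ ^ 2) s := fun s => by
    have hline : HasDerivAt (fun s : ℝ => x + s • u) u s := by
      simpa using ((hasDerivAt_id s).smul_const u).const_add x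
    have hcomp : HasDerivAt (fun s : ℝ => f (x + s • u)) ⟪f' (x + s • u), u⟫ s := by
      have := (hasGradientAt_iff_hasFDerivAt.1 (hf _)).comp_hasDerivAt s hline
      rw [InnerProductSpace.toDual_apply_apply] at this
      exact this
    refine ((hcomp.sub ((hasDerivAt_id s).mul_const ⟪f' x, u⟫)).sub
      (((hasDerivAt_pow 2 s).const_mul (L / 2)).mul_const (‖u‖ ^ 2))).congr_deriv ?_
    simp only [inner_sub_left, Nat.cast_ofNat]
    ring
  have hanti : AntitoneOn g (Set.Icc 0 1) := by
    refine antitoneOn_of_hasDerivWithinAt_nonpos (convex_Icc 0 1)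
      (fun s _ => (hg s).continuousAt.continuousWithinAt) (fun s _ => (hg s).hasDerivWithinAt)
      fun s hs => sub_nonpos.2 ?_
    rw [interior_Icc] at hs
    calc ⟪f' (x + s • u) - f' x, u⟫ ≤ ‖f' (x + s • u) - f' x‖ * ‖u‖ := real_inner_le_norm _ _
      _ ≤ L * ‖s • u‖ * ‖u‖ := by gcongr; simpa using hf' (x + s • u) x
      _ = L * s * ‖u‖ ^ 2 := by rw [norm_smul, Real.norm_of_nonneg hs.1.le]; ring
  have := hanti (Set.left_mem_Icc.2 zero_le_one) (Set.right_mem_Icc.2 zero_le_one) zero_le_one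
  simp only [g, zero_smul, add_zero, zero_mul, one_smul, one_mul, one_pow] at this
  linarith

theorem apply_sub_smul_le_of_lipschitz_gradient {E : Type*} [NormedAddCommGroup E]
    [InnerProductSpace ℝ E] [CompleteSpace E] {f : E → ℝ} {f' : E → E} {L : ℝ}
    (hf : ∀ x, HasGradientAt f (f' x) x) (hf' : ∀ x y, ‖f' x - f' y‖ ≤ L * ‖x - y‖)
    {x v : E} {μ : ℝ} (hμ : 0 ≤ μ) (hv : L * ‖v‖ ^ 2 * μ ≤ ⟪f' x, v⟫) :
    f (x - μ • v) ≤ f x - L * ‖v‖ ^ 2 * μ ^ 2 / 2 := by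
  have h := apply_add_le_of_lipschitz_gradient hf hf' x (-(μ • v))
  rw [← sub_eq_add_neg, inner_neg_right, real_inner_smul_right, norm_neg, norm_smul,
    Real.norm_of_nonneg hμ] at h
  nlinarith [mul_le_mul_of_nonneg_left hv hμ]

theorem norm_sq_sum_smul_eq_card {ι E : Type*} [Fintype ι] [NormedAddCommGroup E]
    [InnerProductSpace ℝ E] {g : ι → E} {α : ι → ℝ} (hα : ∀ i, α i ≠ 0)
    (h : ∀ i, ⟪g i, ∑ j, α j • g j⟫ = 1 / α i) :
    ‖∑ j, α j • g j‖ ^ 2 = Fintype.card ι := by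
  rw [← real_inner_self_eq_norm_sq, sum_inner]
  simp [real_inner_smul_left, h, hα]

theorem nashMTL_step_le {ι E : Type*} [Fintype ι] [NormedAddCommGroup E]
    [InnerProductSpace ℝ E] [CompleteSpace E] {ℓ : ι → E → ℝ} {ℓ' : ι → E → E} {L : ℝ}
    (hL : 0 < L) (hdiff : ∀ i x, HasGradientAt (ℓ i) (ℓ' i x) x)
    (hsmooth : ∀ i x y, ‖ℓ' i x - ℓ' i y‖ ≤ L * ‖x - y‖) {x : E} {α : ι → ℝ} (hα : ∀ i, 0 < α i)
    (heq : ∀ i, ⟪ℓ' i x, ∑ j, α j • ℓ' j x⟫ = 1 / α i) {μ : ℝ} {i : ι} (hμ0 : 0 ≤ μ)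
    (hμ : μ ≤ 1 / (L * Fintype.card ι * α i)) :
    ℓ i (x - μ • ∑ j, α j • ℓ' j x) ≤ ℓ i x - L * Fintype.card ι * μ ^ 2 / 2 := by
  have hnorm := norm_sq_sum_smul_eq_card (fun j => (hα j).ne') heq
  have hcard : (0 : ℝ) < Fintype.card ι := Nat.cast_pos.2 (Fintype.card_pos_iff.2 ⟨i⟩)
  rw [← hnorm]
  refine apply_sub_smul_le_of_lipschitz_gradient (hdiff i) (hsmooth i) hμ0 ?_
  rw [heq, hnorm, le_div_iff₀ (hα i)]
  rw [le_div_iff₀ (mul_pos (mul_pos hL hcard) (hα i))] at hμ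
  linarith

theorem LinearIndependent.eventually_norm_le_mul_norm_sum_smul {ι E : Type*} [Fintype ι]
    [NormedAddCommGroup E] [NormedSpace ℝ E] {b : ι → E} (hb : LinearIndependent ℝ b) :
    ∃ C > 0, ∀ᶠ b' in 𝓝 b, ∀ w : ι → ℝ, ‖w‖ ≤ C * ‖∑ i, w i • b' i‖ := by
  obtain ⟨C, hC0, hC⟩ := (Fintype.linearCombination ℝ b).exists_antilipschitzWith
    (LinearMap.ker_eq_bot.2 hb.fintypeLinearCombination_injective)
  have hnear : ∀ᶠ b' in 𝓝 b, ∑ i, ‖b' i - b i‖ < (2 * (C : ℝ))⁻¹ := by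
    have : Tendsto (fun b' : ι → E => ∑ i, ‖b' i - b i‖) (𝓝 b) (𝓝 0) := by
      simpa using tendsto_finsetSum _ fun i _ =>
        (((continuous_apply i).tendsto b).sub_const (b i)).norm
    exact this.eventually (gt_mem_nhds (by positivity))
  refine ⟨2 * C, by positivity, hnear.mono fun b' hb' w => ?_⟩
  have hperturb : ‖∑ i, w i • b i - ∑ i, w i • b' i‖ ≤ ‖w‖ * ∑ i, ‖b' i - b i‖ := by
    rw [← Finset.sum_sub_distrib, Finset.mul_sum]
    refine norm_sum_le_of_le _ fun i _ => ?_
    rw [← smul_sub, norm_smul, norm_sub_rev]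
    gcongr
    exact norm_le_pi_norm w i
  have hsmall : C * (‖w‖ * ∑ i, ‖b' i - b i‖) ≤ ‖w‖ / 2 := calc
    _ ≤ C * (‖w‖ * (2 * (C : ℝ))⁻¹) := by gcongr
    _ = ‖w‖ / 2 := by field_simp
  have hmain : ‖w‖ ≤ C * (‖∑ i, w i • b' i‖ + ‖w‖ * ∑ i, ‖b' i - b i‖) := calc
    ‖w‖ ≤ C * ‖∑ i, w i • b i‖ := by
      simpa [Fintype.linearCombination_apply] using hC.le_mul_norm (map_zero _) w
    _ ≤ _ := by
      gcongr
      exact (norm_le_insert' _ _).trans (by gcongr)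
  linarith

theorem paretoStationary_of_tendsto {d K : ℕ}
    {ℓ' : Fin K → EuclideanSpace ℝ (Fin d) → EuclideanSpace ℝ (Fin d)}
    {xstar : EuclideanSpace ℝ (Fin d)}
    (hindep : ¬ ParetoStationary ℓ' xstar → LinearIndependent ℝ (fun i => ℓ' i xstar))
    (hcont : ∀ i, ContinuousAt (ℓ' i) xstar) {β : Type*} {l : Filter β} [l.NeBot]
    {x : β → EuclideanSpace ℝ (Fin d)} {w : β → Fin K → ℝ} {B : ℝ}
    (hx : Tendsto x l (𝓝 xstar)) (hw : Tendsto (fun n => ‖w n‖) l atTop)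
    (hB : ∀ n, ‖∑ i, w n i • ℓ' i (x n)‖ ≤ B) :
    ParetoStationary ℓ' xstar := by
  by_contra hPS
  obtain ⟨C, hC0, hC⟩ := (hindep hPS).eventually_norm_le_mul_norm_sum_smul
  have hgrad : Tendsto (fun n i => ℓ' i (x n)) l (𝓝 fun i => ℓ' i xstar) :=
    tendsto_pi_nhds.2 fun i => (hcont i).tendsto.comp hx
  obtain ⟨n, hn, hbig⟩ := ((hgrad.eventually hC).and (hw.eventually_gt_atTop (C * B))).exists
  exact ((hn (w n)).trans (by gcongr; exact hB n)).not_gt hbig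

theorem ciInf_one_div_mul_pos {ι : Type*} [Finite ι] [Nonempty ι] {α : ι → ℝ} {c : ℝ}
    (hc : 0 < c) (hα : ∀ i, 0 < α i) : 0 < ⨅ i, 1 / (c * α i) := by
  obtain ⟨j, hj⟩ := exists_eq_ciInf_of_finite (f := fun i => 1 / (c * α i))
  exact hj ▸ one_div_pos.2 (mul_pos hc (hα j))

theorem inv_mul_ciInf_one_div_mul_le_norm {ι : Type*} [Fintype ι] [Nonempty ι] (α : ι → ℝ)
    (c : ℝ) : (c * ⨅ i, 1 / (c * α i))⁻¹ ≤ ‖α‖ := by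
  obtain ⟨j, hj⟩ := exists_eq_ciInf_of_finite (f := fun i => 1 / (c * α i))
  rw [← hj]
  by_cases hc : c = 0
  · simp [hc]
  · rw [one_div, mul_inv, inv_inv, ← mul_assoc, inv_mul_cancel₀ hc, one_mul]
    exact (Real.le_norm_self _).trans (norm_le_pi_norm α j)

theorem tendsto_norm_atTop_of_tendsto_ciInf_one_div_mul {β ι : Type*} [Fintype ι] [Nonempty ι]
    {l : Filter β} {α : β → ι → ℝ} {c : ℝ} (hc : 0 < c) (hα : ∀ n i, 0 < α n i)
    (h : Tendsto (fun n => ⨅ i, 1 / (c * α n i)) l (𝓝 0)) :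
    Tendsto (fun n => ‖α n‖) l atTop :=
  tendsto_atTop_mono (fun n => inv_mul_ciInf_one_div_mul_le_norm (α n) c)
    (Tendsto.inv_tendsto_nhdsGT_zero (tendsto_nhdsWithin_iff.2
      ⟨by simpa using h.const_mul c,
        .of_forall fun n => mul_pos hc (ciInf_one_div_mul_pos hc (hα n))⟩))

theorem tendsto_zero_of_mul_sq_le_sub_succ {u μ : ℕ → ℝ} {a c : ℝ}
    (hu : Tendsto u atTop (𝓝 a)) (hc : 0 < c) (hμ : ∀ n, 0 ≤ μ n)
    (h : ∀ n, c * μ n ^ 2 ≤ u n - u (n + 1)) : Tendsto μ atTop (𝓝 0) := by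
  have hgap : Tendsto (fun n => (u n - u (n + 1)) / c) atTop (𝓝 0) := by
    simpa using (hu.sub (hu.comp (tendsto_add_atTop_nat 1))).div_const c
  have hsq : Tendsto (fun n => μ n ^ 2) atTop (𝓝 0) :=
    squeeze_zero (fun n => sq_nonneg _) (fun n => (le_div_iff₀' hc).2 (h n)) hgap
  simpa [Real.sqrt_sq (hμ _)] using hsq.sqrt

/-- Nonconvex convergence of Nash-MTL: under differentiability, `L`-smoothness, boundedness
below, compact sublevel sets, and linear independence of gradients at non-Pareto-stationary
points, the iterates have a subsequence converging to a Pareto stationary point `θ*`, and all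
task losses converge to their values at `θ*`. -/
theorem stmt_10 {d K : ℕ} (hK : 0 < K) (L : ℝ) (hL : 0 < L)
    (ℓ : Fin K → EuclideanSpace ℝ (Fin d) → ℝ)
    (ℓ' : Fin K → EuclideanSpace ℝ (Fin d) → EuclideanSpace ℝ (Fin d))
    (hdiff : ∀ i x, HasGradientAt (ℓ i) (ℓ' i x) x)
    (hsmooth : ∀ i x y, ‖ℓ' i x - ℓ' i y‖ ≤ L * ‖x - y‖)
    (hbdd : ∀ i, BddBelow (Set.range (ℓ i)))
    (hsublevel : ∀ c : ℝ, IsCompact {x | (1 / K : ℝ) * ∑ i, ℓ i x ≤ c})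
    (hindep : ∀ x, ¬ ParetoStationary ℓ' x → LinearIndependent ℝ (fun i => ℓ' i x))
    (θ : ℕ → EuclideanSpace ℝ (Fin d)) (α : ℕ → Fin K → ℝ) (μ : ℕ → ℝ)
    (hα : ∀ t i, 0 < α t i)
    (heq : ∀ t i, ⟪ℓ' i (θ t), ∑ j, α t j • ℓ' j (θ t)⟫ = 1 / α t i)
    (hμ : ∀ t, μ t = ⨅ j, 1 / (L * K * α t j))
    (hstep : ∀ t, θ (t + 1) = θ t - μ t • ∑ j, α t j • ℓ' j (θ t)) :
    ∃ (θstar : EuclideanSpace ℝ (Fin d)) (φ : ℕ → ℕ), StrictMono φ ∧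
      Filter.Tendsto (θ ∘ φ) Filter.atTop (nhds θstar) ∧
      ParetoStationary ℓ' θstar ∧
      ∀ i, Filter.Tendsto (fun t => ℓ i (θ t)) Filter.atTop (nhds (ℓ i θstar)) := by
  have : Nonempty (Fin K) := ⟨⟨0, hK⟩⟩
  have hLK : 0 < L * K := mul_pos hL (Nat.cast_pos.2 hK)
  have hμ0 : ∀ t, 0 < μ t := fun t => hμ t ▸ ciInf_one_div_mul_pos hLK (hα t)
  have hdrop : ∀ t i, ℓ i (θ (t + 1)) ≤ ℓ i (θ t) - L * K * μ t ^ 2 / 2 := fun t i => by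
    have h := nashMTL_step_le (i := i) hL hdiff hsmooth (hα t) (heq t) (hμ0 t).le
      (by rw [Fintype.card_fin, hμ t]; exact ciInf_le (Finite.bddBelow_range _) i)
    rwa [Fintype.card_fin, ← hstep] at h
  have hanti : ∀ i, Antitone fun t => ℓ i (θ t) := fun i =>
    antitone_nat_of_succ_le fun t => (hdrop t i).trans (by nlinarith [hμ0 t])
  have hconv : ∀ i, Tendsto (fun t => ℓ i (θ t)) atTop (𝓝 (⨅ t, ℓ i (θ t))) := fun i =>
    tendsto_atTop_ciInf (hanti i) ((hbdd i).mono (Set.range_comp_subset_range θ (ℓ i)))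
  have hα_lim : Tendsto (fun t => ‖α t‖) atTop atTop :=
    tendsto_norm_atTop_of_tendsto_ciInf_one_div_mul hLK hα <| funext hμ ▸
      tendsto_zero_of_mul_sq_le_sub_succ (hconv ⟨0, hK⟩) (half_pos hLK) (fun t => (hμ0 t).le)
        fun t => by linarith [hdrop t ⟨0, hK⟩]
  obtain ⟨θstar, -, φ, hφ, hθφ⟩ := (hsublevel ((1 / K : ℝ) * ∑ i, ℓ i (θ 0))).tendsto_subseq
    (x := θ) fun t =>
      mul_le_mul_of_nonneg_left (Finset.sum_le_sum fun i _ => hanti i t.zero_le) (by positivity)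
  have hlim : ∀ i, ⨅ t, ℓ i (θ t) = ℓ i θstar := fun i =>
    tendsto_nhds_unique ((hconv i).comp hφ.tendsto_atTop)
      ((hdiff i θstar).differentiableAt.continuousAt.tendsto.comp hθφ)
  refine ⟨θstar, φ, hφ, hθφ, paretoStationary_of_tendsto (hindep θstar) (fun i => ?_) hθφ
    (hα_lim.comp hφ.tendsto_atTop) (B := √K) fun t => ?_, fun i => hlim i ▸ hconv i⟩
  · exact (LipschitzWith.of_dist_le' fun x y => by
      simpa only [dist_eq_norm] using hsmooth i x y).continuous.continuousAt
  · exact (Real.le_sqrt (norm_nonneg _) K.cast_nonneg).2 <| by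
      simpa using (norm_sq_sum_smul_eq_card (fun j => (hα (φ t) j).ne') (heq (φ t))).le
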